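/- arXiv:2505.12353 — 2 statements merged into one kernel-verified Lean document; each statement's English description precedes it below -/
import Mathlib

section
/- Let h : ℝ^p → ℝ be differentiable and positively homogeneous of degree α > 0, and let g : ℝ → ℝ be continuously differentiable. If θ satisfies h(θ) = 0, then ∫₀¹ ∇(g∘h)(tθ) dt = (g'(0)/α) · ∇h(θ). -/
/-!
Euler's relation for derivatives: differentiating `h (t • x) = t ^ α * h x` in `x` shows that
`∇h (t • θ) = t ^ (α - 1) • ∇h θ` for `t > 0`. Since `h θ = 0`, homogeneity also gives
`h (t • θ) = 0`, so by the chain rule the integrand is `g'(0) t ^ (α - 1) • ∇h θ` on `(0, 1]`,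
and `∫₀¹ t ^ (α - 1) dt = 1 / α`.
-/

section

variable {E : Type*} [NormedAddCommGroup E]

theorem fderiv_smul_of_homogeneous {F : Type*} [NormedSpace ℝ E] [NormedAddCommGroup F]
    [NormedSpace ℝ F] {h : E → F} {α t : ℝ} (ht : 0 < t)
    (hhom : ∀ x, h (t • x) = t ^ α • h x) (x : E) :
    fderiv ℝ h (t • x) = t ^ (α - 1) • fderiv ℝ h x := by
  have hscaled : t • fderiv ℝ h (t • x) = t ^ α • fderiv ℝ h x := by
    rw [← fderiv_comp_smul, funext hhom, ← Pi.smul_def, fderiv_const_smul_field, Pi.smul_apply]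
  rw [Real.rpow_sub_one ht.ne', div_eq_inv_mul, ← smul_smul, ← hscaled, smul_smul,
    inv_mul_cancel₀ ht.ne', one_smul]

variable [InnerProductSpace ℝ E] [CompleteSpace E]

theorem gradient_smul_of_homogeneous {h : E → ℝ} {α t : ℝ} (ht : 0 < t)
    (hhom : ∀ x, h (t • x) = t ^ α * h x) (x : E) :
    gradient h (t • x) = t ^ (α - 1) • gradient h x := by
  rw [gradient, fderiv_smul_of_homogeneous ht hhom, map_smul, gradient]

theorem gradient_comp {g : ℝ → ℝ} {h : E → ℝ} {x : E} (hg : DifferentiableAt ℝ g (h x))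
    (hh : DifferentiableAt ℝ h x) :
    gradient (g ∘ h) x = deriv g (h x) • gradient h x := by
  rw [gradient, (hg.hasDerivAt.comp_hasFDerivAt x hh.hasFDerivAt).fderiv, map_smul, gradient]

end

theorem integral_rpow_sub_one_zero_one {α : ℝ} (hα : 0 < α) :
    ∫ t in (0 : ℝ)..1, t ^ (α - 1) = α⁻¹ := by
  rw [integral_rpow (Or.inl (by linarith)), sub_add_cancel, Real.one_rpow,
    Real.zero_rpow hα.ne', sub_zero, one_div]

theorem adjoint_of_composition_zero {p : ℕ} (g : ℝ → ℝ) (h : EuclideanSpace ℝ (Fin p) → ℝ)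
    (α : ℝ) (hg : ContDiff ℝ 1 g) (hh : Differentiable ℝ h) (hα : 0 < α)
    (hhom : ∀ t : ℝ, 0 < t → ∀ θ, h (t • θ) = t ^ α * h θ)
    (θ : EuclideanSpace ℝ (Fin p)) (hθ : h θ = 0) :
    ∫ t in (0:ℝ)..1, gradient (g ∘ h) (t • θ)
      = (deriv g 0 / α) • gradient h θ := by
  have hray : ∀ t ∈ Set.uIoc (0 : ℝ) 1,
      gradient (g ∘ h) (t • θ) = (t ^ (α - 1) * deriv g 0) • gradient h θ := by
    intro t ht
    rw [Set.uIoc_of_le zero_le_one] at ht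
    have hzero : h (t • θ) = 0 := by rw [hhom t ht.1, hθ, mul_zero]
    rw [gradient_comp (hg.differentiable one_ne_zero _) (hh _), hzero,
      gradient_smul_of_homogeneous ht.1 (hhom t ht.1), smul_smul, mul_comm]
  rw [intervalIntegral.integral_congr_ae (Filter.Eventually.of_forall hray),
    intervalIntegral.integral_smul_const, intervalIntegral.integral_mul_const, integral_rpow_sub_one_zero_one hα, inv_mul_eq_div]
end

section
/- Let ℓ : ℝ → ℝ be nonnegative with ℓ and √ℓ continuously differentiable where needed, and let f : ℝ^p → ℝ be differentiable and positively homogeneous of degree α > 0. Define h(θ) = √(ℓ(f(θ))). Then for θ with f(θ) ≠ 0, ∫₀¹ ∇h(tθ) dt = ((√(ℓ(f(θ))) − √(ℓ(0))) / (α f(θ))) · ∇f(θ). -/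
/-!
Along the ray `t ↦ t • θ`, homogeneity gives `f (t • θ) = t ^ α * f θ` and
`∇f (t • θ) = t ^ (α - 1) • ∇f θ`, so by the chain rule `∇(g ∘ f) (t • θ)` is the `t`-derivative of
`(g (t ^ α * f θ) / (α * f θ)) • ∇f θ`. Since `0 ^ α = 0`, the fundamental theorem of calculus
on `[0, 1]` gives the claim for any `g` differentiable along the ray, in particular `g = √ℓ`.
-/

open Real MeasureTheory intervalIntegral Set

def IsPosHomogeneous {E : Type*} [SMul ℝ E] (f : E → ℝ) (α : ℝ) : Prop :=
  ∀ t : ℝ, 0 < t → ∀ x, f (t • x) = t ^ α * f x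

variable {E : Type*} [NormedAddCommGroup E] [InnerProductSpace ℝ E] [CompleteSpace E]

theorem HasDerivAt.comp_hasGradientAt {g : ℝ → ℝ} {f : E → ℝ} {c : ℝ} {f' x : E}
    (hg : HasDerivAt g c (f x)) (hf : HasGradientAt f f' x) :
    HasGradientAt (fun y => g (f y)) (c • f') x := by
  rw [hasGradientAt_iff_hasFDerivAt] at hf ⊢
  rw [map_smulₛₗ]
  exact hg.comp_hasFDerivAt x hf

theorem HasGradientAt.comp_const_smul {f : E → ℝ} {f' x : E} (t : ℝ)
    (hf : HasGradientAt f f' (t • x)) :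
    HasGradientAt (fun y => f (t • y)) (t • f') x := by
  rw [hasGradientAt_iff_hasFDerivAt] at hf ⊢
  refine (hf.comp x ((hasFDerivAt_id x).const_smul t)).congr_fderiv ?_
  ext y
  simp

theorem IsPosHomogeneous.hasGradientAt_smul {f : E → ℝ} {α t : ℝ} (hhom : IsPosHomogeneous f α)
    (ht : 0 < t) {x : E} (hx : DifferentiableAt ℝ f x) :
    HasGradientAt f (t ^ (α - 1) • gradient f x) (t • x) := by
  have hx' : HasGradientAt f (gradient f x) (t⁻¹ • t • x) := by
    rw [inv_smul_smul₀ ht.ne']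
    exact hx.hasGradientAt
  have hscaled := (hasDerivAt_mul_const (t ^ α)).comp_hasGradientAt (hx'.comp_const_smul t⁻¹)
  have hf_eq : (fun y => f (t⁻¹ • y) * t ^ α) = f := by
    ext y
    rw [hhom _ (inv_pos.mpr ht), inv_rpow ht.le, mul_comm, ← mul_assoc,
      mul_inv_cancel₀ (rpow_pos_of_pos ht α).ne', one_mul]
  rwa [hf_eq, smul_smul, ← rpow_neg_one, ← rpow_add ht, ← sub_eq_add_neg] at hscaled

theorem IsPosHomogeneous.integral_gradient_comp_smul {f : E → ℝ} {g : ℝ → ℝ} {α : ℝ}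
    (hhom : IsPosHomogeneous f α) (hα : 0 < α) {θ : E} (hθ : f θ ≠ 0)
    (hf : DifferentiableAt ℝ f θ) (hg : Continuous g)
    (hg' : ∀ t ∈ Ioo (0 : ℝ) 1, DifferentiableAt ℝ g (f (t • θ)))
    (hint : IntervalIntegrable (fun t : ℝ => gradient (fun w => g (f w)) (t • θ)) volume 0 1) :
    ∫ t in (0 : ℝ)..1, gradient (fun w => g (f w)) (t • θ)
      = ((g (f θ) - g 0) / (α * f θ)) • gradient f θ := by
  set G : ℝ → E := fun t => (g (t ^ α * f θ) / (α * f θ)) • gradient f θ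
  have hG_cont : ContinuousOn G (Icc 0 1) := by
    refine ((hg.comp_continuousOn ?_).div_const _).smul continuousOn_const
    exact (continuousOn_id.rpow_const fun _ _ => Or.inr hα.le).mul continuousOn_const
  have hG_deriv : ∀ t ∈ Ioo (0 : ℝ) 1,
      HasDerivAt G (gradient (fun w => g (f w)) (t • θ)) t := by
    intro t ht
    have hgt : HasDerivAt g (deriv g (f (t • θ))) (f (t • θ)) := (hg' t ht).hasDerivAt
    have hgrad : gradient (fun w => g (f w)) (t • θ)
        = (deriv g (f (t • θ)) * t ^ (α - 1)) • gradient f θ := by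
      rw [(hgt.comp_hasGradientAt (hhom.hasGradientAt_smul ht.1 hf)).gradient, smul_smul]
    rw [hhom t ht.1] at hgt hgrad
    have hray := ((hgt.comp t ((hasDerivAt_rpow_const (Or.inl ht.1.ne')).mul_const (f θ))).div_const
      (α * f θ)).smul_const (gradient f θ)
    rw [hgrad]
    refine hray.congr_deriv ?_
    congr 1
    field_simp [hα.ne']
  rw [integral_eq_sub_of_hasDeriv_right_of_le zero_le_one hG_cont
    (fun t ht => (hG_deriv t ht).hasDerivWithinAt) hint]
  simp only [G, one_rpow, one_mul, zero_rpow hα.ne', zero_mul, ← sub_smul, sub_div]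

theorem adjoint_sqrt_loss_homogeneous_general {p : ℕ} (ℓ : ℝ → ℝ)
    (f : EuclideanSpace ℝ (Fin p) → ℝ) (α : ℝ)
    (hℓC : ContDiff ℝ 1 ℓ) (hf : Differentiable ℝ f) (hα : 0 < α)
    (hhom : ∀ t : ℝ, 0 < t → ∀ θ, f (t • θ) = t ^ α * f θ)
    (θ : EuclideanSpace ℝ (Fin p)) (hθ : f θ ≠ 0)
    (hpos : ∀ t ∈ Set.Ioc (0:ℝ) 1, 0 < ℓ (f (t • θ)))
    (hint : IntervalIntegrable
      (fun t : ℝ => gradient (fun w => Real.sqrt (ℓ (f w))) (t • θ))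
      MeasureTheory.volume 0 1) :
    ∫ t in (0:ℝ)..1, gradient (fun w => Real.sqrt (ℓ (f w))) (t • θ)
      = ((Real.sqrt (ℓ (f θ)) - Real.sqrt (ℓ 0)) / (α * f θ)) • gradient f θ :=
  IsPosHomogeneous.integral_gradient_comp_smul (g := fun y => √(ℓ y)) hhom hα hθ (hf θ)
    hℓC.continuous.sqrt
    (fun t ht => (hℓC.differentiable one_ne_zero _).sqrt (hpos t (Ioo_subset_Ioc_self ht)).ne')
    hint

theorem adjoint_sqrt_loss_homogeneous {p : ℕ} (ℓ : ℝ → ℝ)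
    (f : EuclideanSpace ℝ (Fin p) → ℝ) (α : ℝ)
    (hℓ : ∀ t, 0 ≤ ℓ t) (hℓC : ContDiff ℝ 1 ℓ) (hf : Differentiable ℝ f) (hα : 0 < α)
    (hhom : ∀ t : ℝ, 0 < t → ∀ θ, f (t • θ) = t ^ α * f θ)
    (θ : EuclideanSpace ℝ (Fin p)) (hθ : f θ ≠ 0)
    (hpos : ∀ t ∈ Set.Ioc (0:ℝ) 1, 0 < ℓ (f (t • θ)))
    (hint : IntervalIntegrable
      (fun t : ℝ => gradient (fun w => Real.sqrt (ℓ (f w))) (t • θ))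
      MeasureTheory.volume 0 1) :
    ∫ t in (0:ℝ)..1, gradient (fun w => Real.sqrt (ℓ (f w))) (t • θ)
      = ((Real.sqrt (ℓ (f θ)) - Real.sqrt (ℓ 0)) / (α * f θ)) • gradient f θ :=
  adjoint_sqrt_loss_homogeneous_general ℓ f α hℓC hf hα hhom θ hθ hpos hint
end
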